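/- Let X∘ be a symmetric solution of CGDARE(Σ) and let X_{t+1} = X_{t+1}ᵀ ∈ ℝ^{n×n} satisfy ker R_{X_{t+1}} ⊆ ker S_{X_{t+1}}. Define X_t := ℛ(X_{t+1}), Δ_{t+1} := X_{t+1} − X∘ and Δ_t := X_t − X∘. Then Δ_t = A_{X∘}ᵀ Δ_{t+1} A_{X∘} − A_{X∘}ᵀ Δ_{t+1} B (R + Bᵀ X_{t+1} B)† Bᵀ Δ_{t+1} A_{X∘}. -/

import Mathlib

open Matrix

-- The Moore–Penrose pseudoinverse of a real matrix, characterised by the four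
-- Penrose equations (it exists and is unique for every real matrix).
open Classical in
noncomputable def mpinv {α β : Type*} [Fintype α] [Fintype β]
    (M : Matrix α β ℝ) : Matrix β α ℝ :=
  if h : ∃ P : Matrix β α ℝ,
      M * P * M = M ∧ P * M * P = P ∧ (M * P)ᵀ = M * P ∧ (P * M)ᵀ = P * M
  then h.choose else 0

/-- `R_X = R + BᵀXB`. -/
noncomputable def RX {ι κ : Type*} [Fintype ι] [Fintype κ]
    (R : Matrix κ κ ℝ) (B : Matrix ι κ ℝ) (X : Matrix ι ι ℝ) : Matrix κ κ ℝ :=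
  R + Bᵀ * X * B

/-- `S_X = AᵀXB + S`. -/
noncomputable def SX {ι κ : Type*} [Fintype ι] [Fintype κ]
    (A : Matrix ι ι ℝ) (B S : Matrix ι κ ℝ) (X : Matrix ι ι ℝ) : Matrix ι κ ℝ :=
  Aᵀ * X * B + S

/-- `K_X = R_X† S_Xᵀ`. -/
noncomputable def KX {ι κ : Type*} [Fintype ι] [Fintype κ]
    (A : Matrix ι ι ℝ) (B S : Matrix ι κ ℝ) (R : Matrix κ κ ℝ) (X : Matrix ι ι ℝ) :
    Matrix κ ι ℝ :=
  mpinv (RX R B X) * (SX A B S X)ᵀ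

/-- The closed-loop matrix `A_X = A - B K_X`. -/
noncomputable def AX {ι κ : Type*} [Fintype ι] [Fintype κ]
    (A : Matrix ι ι ℝ) (B S : Matrix ι κ ℝ) (R : Matrix κ κ ℝ) (X : Matrix ι ι ℝ) :
    Matrix ι ι ℝ :=
  A - B * KX A B S R X

/-- The kernel condition `ker R_X ⊆ ker S_X`. -/
def KerCond {ι κ : Type*} [Fintype ι] [Fintype κ]
    (A : Matrix ι ι ℝ) (B S : Matrix ι κ ℝ) (R : Matrix κ κ ℝ) (X : Matrix ι ι ℝ) : Prop :=
  ∀ v : κ → ℝ, (RX R B X).mulVec v = 0 → (SX A B S X).mulVec v = 0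

/-- The Riccati operator `𝔇(X) = X - AᵀXA + S_X R_X† S_Xᵀ - Q`. -/
noncomputable def DOp {ι κ : Type*} [Fintype ι] [Fintype κ]
    (A Q : Matrix ι ι ℝ) (B S : Matrix ι κ ℝ) (R : Matrix κ κ ℝ) (X : Matrix ι ι ℝ) :
    Matrix ι ι ℝ :=
  X - Aᵀ * X * A + SX A B S X * mpinv (RX R B X) * (SX A B S X)ᵀ - Q

/-- The Riccati map `ℛ(X) = AᵀXA - S_X R_X† S_Xᵀ + Q`. -/
noncomputable def Ricc {ι κ : Type*} [Fintype ι] [Fintype κ]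
    (A Q : Matrix ι ι ℝ) (B S : Matrix ι κ ℝ) (R : Matrix κ κ ℝ) (X : Matrix ι ι ℝ) :
    Matrix ι ι ℝ :=
  Aᵀ * X * A - SX A B S X * mpinv (RX R B X) * (SX A B S X)ᵀ + Q

/-- `X` is a symmetric solution of CGDARE(Σ): it is symmetric, satisfies the GDARE and
the kernel condition `ker R_X ⊆ ker S_X`. -/
def IsCGDARESolution {ι κ : Type*} [Fintype ι] [Fintype κ]
    (A Q : Matrix ι ι ℝ) (B S : Matrix ι κ ℝ) (R : Matrix κ κ ℝ) (X : Matrix ι ι ℝ) : Prop :=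
  Xᵀ = X ∧ X = Ricc A Q B S R X ∧ KerCond A B S R X

/-- The matrix `N = [[A, 0, B], [Q, -I, S], [Sᵀ, 0, R]]` of the extended symplectic pencil. -/
noncomputable def Nmat {n m : ℕ} (A Q : Matrix (Fin n) (Fin n) ℝ)
    (B S : Matrix (Fin n) (Fin m) ℝ) (R : Matrix (Fin m) (Fin m) ℝ) :
    Matrix (Fin n ⊕ (Fin n ⊕ Fin m)) (Fin n ⊕ (Fin n ⊕ Fin m)) ℝ :=
  fromBlocks A (fromCols 0 B) (fromRows Q Sᵀ) (fromBlocks (-1) S 0 R)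

/-- The matrix `M = [[I, 0, 0], [0, -Aᵀ, 0], [0, -Bᵀ, 0]]` of the extended symplectic pencil. -/
noncomputable def Mmat {n m : ℕ} (A : Matrix (Fin n) (Fin n) ℝ)
    (B : Matrix (Fin n) (Fin m) ℝ) :
    Matrix (Fin n ⊕ (Fin n ⊕ Fin m)) (Fin n ⊕ (Fin n ⊕ Fin m)) ℝ :=
  fromBlocks 1 0 0 (fromBlocks (-Aᵀ) 0 (-Bᵀ) 0)


/-!
Completing the square around an arbitrary gain `K` gives
`ℛ(X) = ℛ_K(X) - (K - K_X)ᵀ R_X (K - K_X)`, where `ℛ_K` is the Riccati map with the gain frozen at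
`K`; this needs only `R_X K_X = S_Xᵀ`, which is what the kernel condition buys. With
`K = K_{X∘}` the square vanishes at `X∘`, and `ℛ_K(X_{t+1}) - ℛ_K(X∘) = A_{X∘}ᵀ Δ A_{X∘}` since
`ℛ_K` is affine. The remaining square is rewritten through `R_{X_{t+1}} R_{X_{t+1}}† R_{X_{t+1}} =
R_{X_{t+1}}` and `R_{X_{t+1}} (K_{X∘} - K_{X_{t+1}}) = -Bᵀ Δ A_{X∘}`.
-/

section MoorePenrose

variable {𝕜 α β : Type*} [CommRing 𝕜] [Fintype α] [Fintype β]

def IsMoorePenroseInverse (M : Matrix α β 𝕜) (P : Matrix β α 𝕜) : Prop :=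
  M * P * M = M ∧ P * M * P = P ∧ (M * P)ᵀ = M * P ∧ (P * M)ᵀ = P * M

namespace IsMoorePenroseInverse

variable {M : Matrix α β 𝕜} {P : Matrix β α 𝕜}

theorem transpose (h : IsMoorePenroseInverse M P) : IsMoorePenroseInverse Mᵀ Pᵀ := by
  obtain ⟨h₁, h₂, h₃, h₄⟩ := h
  refine ⟨?_, ?_, ?_, ?_⟩
  · rw [← transpose_mul, ← transpose_mul, ← Matrix.mul_assoc, h₁]
  · rw [← transpose_mul, ← transpose_mul, ← Matrix.mul_assoc, h₂]
  · rw [← transpose_mul, transpose_transpose, h₄]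
  · rw [← transpose_mul, transpose_transpose, h₃]

theorem unique {P' : Matrix β α 𝕜} (h : IsMoorePenroseInverse M P)
    (h' : IsMoorePenroseInverse M P') : P = P' := by
  obtain ⟨h₁, h₂, h₃, h₄⟩ := h
  obtain ⟨h₁', h₂', h₃', h₄'⟩ := h'
  have hMP : M * P = M * P' :=
    calc M * P = (M * P' * M * P)ᵀ := by rw [h₁', h₃]
      _ = (M * P' * (M * P))ᵀ := by simp only [Matrix.mul_assoc]
      _ = M * P * (M * P') := by rw [transpose_mul, h₃, h₃']
      _ = M * P * M * P' := by simp only [Matrix.mul_assoc]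
      _ = M * P' := by rw [h₁]
  have hPM : P * M = P' * M :=
    calc P * M = (P * (M * P' * M))ᵀ := by rw [h₁', h₄]
      _ = (P * M * (P' * M))ᵀ := by simp only [Matrix.mul_assoc]
      _ = P' * M * (P * M) := by rw [transpose_mul, h₄, h₄']
      _ = P' * (M * P * M) := by simp only [Matrix.mul_assoc]
      _ = P' * M := by rw [h₁]
  calc P = P * (M * P') := by rw [← hMP, ← Matrix.mul_assoc, h₂]
    _ = P' := by rw [← Matrix.mul_assoc, hPM, h₂']

theorem transpose_mul_mul {γ : Type*} [Fintype γ] {M : Matrix α α 𝕜} {P : Matrix α α 𝕜}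
    (h : IsMoorePenroseInverse M P) (hM : Mᵀ = M) (W : Matrix α γ 𝕜) :
    (M * W)ᵀ * P * (M * W) = Wᵀ * M * W := by
  rw [transpose_mul, hM, ← Matrix.mul_assoc, Matrix.mul_assoc Wᵀ M P,
    Matrix.mul_assoc Wᵀ (M * P) M, h.1]

end IsMoorePenroseInverse

end MoorePenrose

theorem IsMoorePenroseInverse.mpinv_eq {α β : Type*} [Fintype α] [Fintype β]
    {M : Matrix α β ℝ} {P : Matrix β α ℝ} (h : IsMoorePenroseInverse M P) : mpinv M = P := by
  have hex : ∃ P, IsMoorePenroseInverse M P := ⟨P, h⟩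
  exact (dif_pos hex).trans (hex.choose_spec.unique h)

section Symmetric

variable {α : Type*} [Fintype α] [DecidableEq α] {M : Matrix α α ℝ}

/- Since `0⁻¹ = 0` in `ℝ`, `x * x⁻¹ * x = x` holds for every real `x`, so the functional calculus
turns it into the Penrose equations. -/
theorem isMoorePenroseInverse_cfc_inv (hM : Mᵀ = M) :
    IsMoorePenroseInverse M (cfc (·⁻¹ : ℝ → ℝ) M) := by
  have hM' : IsSelfAdjoint M := by
    rwa [IsSelfAdjoint, star_eq_conjTranspose, conjTranspose_eq_transpose_of_trivial]
  have hmul (f g : ℝ → ℝ) : cfc f M * cfc g M = cfc (fun x ↦ f x * g x) M :=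
    (cfc_mul f g M (M.finite_real_spectrum.continuousOn f)
      (M.finite_real_spectrum.continuousOn g)).symm
  have htranspose (f : ℝ → ℝ) : (cfc f M)ᵀ = cfc f M := by
    rw [← conjTranspose_eq_transpose_of_trivial, ← star_eq_conjTranspose]
    exact (cfc_predicate f M).star_eq
  suffices h : IsMoorePenroseInverse (cfc (fun x : ℝ ↦ x) M) (cfc (·⁻¹ : ℝ → ℝ) M) by
    rwa [cfc_id' ℝ M] at h
  refine ⟨?_, ?_, ?_, ?_⟩
  · simp only [hmul, mul_inv_mul_cancel]
  · simp only [hmul]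
    congr 1
    funext x
    simpa using mul_inv_mul_cancel x⁻¹
  · rw [hmul, htranspose]
  · rw [hmul, htranspose]

theorem isMoorePenroseInverse_mpinv_of_transpose_eq (hM : Mᵀ = M) :
    IsMoorePenroseInverse M (mpinv M) := by
  rw [(isMoorePenroseInverse_cfc_inv hM).mpinv_eq]
  exact isMoorePenroseInverse_cfc_inv hM

theorem transpose_mpinv_of_transpose_eq (hM : Mᵀ = M) : (mpinv M)ᵀ = mpinv M := by
  conv_rhs => rw [← hM]
  exact ((isMoorePenroseInverse_mpinv_of_transpose_eq hM).transpose.mpinv_eq).symm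

end Symmetric

section KernelInclusion

variable {𝕜 ι κ γ : Type*} [CommRing 𝕜] [Fintype κ]
  {R : Matrix κ κ 𝕜} {S : Matrix ι κ 𝕜}

theorem mul_eq_zero_of_ker_le (hker : ∀ v, R *ᵥ v = 0 → S *ᵥ v = 0) {N : Matrix κ γ 𝕜}
    (hN : R * N = 0) : S * N = 0 := by
  ext i j
  have hcol : R *ᵥ (fun k ↦ N k j) = 0 := funext fun k ↦ congrFun (congrFun hN k) j
  exact congrFun (hker _ hcol) i

theorem mul_mul_eq_of_ker_le [DecidableEq κ] (hker : ∀ v, R *ᵥ v = 0 → S *ᵥ v = 0)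
    {P : Matrix κ κ 𝕜} (hP : R * P * R = R) : S * P * R = S := by
  have h := mul_eq_zero_of_ker_le hker (N := P * R - 1) (by
    rw [Matrix.mul_sub, ← Matrix.mul_assoc, hP, Matrix.mul_one, sub_self])
  rwa [Matrix.mul_sub, Matrix.mul_one, sub_eq_zero, ← Matrix.mul_assoc] at h

end KernelInclusion

section Riccati

variable {ι κ : Type*} [Fintype ι] [Fintype κ] [DecidableEq κ]
  {A Q : Matrix ι ι ℝ} {B S : Matrix ι κ ℝ} {R : Matrix κ κ ℝ} {X Y : Matrix ι ι ℝ}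

/-- The Riccati map with the gain frozen at `K`:
`(A - BK)ᵀ X (A - BK) + [I; -K]ᵀ Π [I; -K]`, affine in `X`. -/
noncomputable def gainRicc (A Q : Matrix ι ι ℝ) (B S : Matrix ι κ ℝ) (R : Matrix κ κ ℝ)
    (K : Matrix κ ι ℝ) (X : Matrix ι ι ℝ) : Matrix ι ι ℝ :=
  (A - B * K)ᵀ * X * (A - B * K) + Q - S * K - Kᵀ * Sᵀ + Kᵀ * R * K

omit [DecidableEq κ] in
theorem gainRicc_sub_gainRicc (K : Matrix κ ι ℝ) :
    gainRicc A Q B S R K X - gainRicc A Q B S R K Y = (A - B * K)ᵀ * (X - Y) * (A - B * K) := by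
  simp only [gainRicc, Matrix.mul_sub, Matrix.sub_mul]
  abel

omit [DecidableEq κ] in
theorem transpose_RX (hR : Rᵀ = R) (hX : Xᵀ = X) : (RX R B X)ᵀ = RX R B X := by
  simp only [RX, transpose_add, transpose_mul, transpose_transpose, hR, hX, Matrix.mul_assoc]

theorem RX_mul_KX (hR : Rᵀ = R) (hX : Xᵀ = X) (hker : KerCond A B S R X) :
    RX R B X * KX A B S R X = (SX A B S X)ᵀ := by
  have hMP := isMoorePenroseInverse_mpinv_of_transpose_eq (transpose_RX (B := B) hR hX)
  have h := congrArg transpose (mul_mul_eq_of_ker_le hker hMP.1)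
  rw [transpose_mul, transpose_mul, transpose_RX hR hX,
    transpose_mpinv_of_transpose_eq (transpose_RX hR hX)] at h
  exact h

theorem Ricc_eq_gainRicc_sub (hR : Rᵀ = R) (hX : Xᵀ = X) (hker : KerCond A B S R X)
    (K : Matrix κ ι ℝ) :
    Ricc A Q B S R X =
      gainRicc A Q B S R K X - (K - KX A B S R X)ᵀ * RX R B X * (K - KX A B S R X) := by
  have hRK := RX_mul_KX hR hX hker
  have hKRK : (KX A B S R X)ᵀ * RX R B X * KX A B S R X =
      SX A B S X * mpinv (RX R B X) * (SX A B S X)ᵀ := by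
    rw [Matrix.mul_assoc, hRK, KX, transpose_mul, transpose_transpose,
      transpose_mpinv_of_transpose_eq (transpose_RX hR hX), Matrix.mul_assoc]
  have hsquare : (K - KX A B S R X)ᵀ * RX R B X * (K - KX A B S R X) =
      Kᵀ * RX R B X * K - Kᵀ * (SX A B S X)ᵀ - SX A B S X * K +
        SX A B S X * mpinv (RX R B X) * (SX A B S X)ᵀ := by
    have hcross : (KX A B S R X)ᵀ * RX R B X * K = SX A B S X * K := by
      rw [← transpose_RX hR hX, ← transpose_mul, hRK, transpose_transpose]
    simp only [transpose_sub, Matrix.sub_mul, Matrix.mul_sub]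
    rw [hcross, hKRK, Matrix.mul_assoc Kᵀ (RX R B X) (KX A B S R X), hRK]
    abel
  rw [hsquare, Ricc, gainRicc, RX, SX]
  simp only [transpose_sub, transpose_add, transpose_mul, transpose_transpose, hX,
    Matrix.sub_mul, Matrix.mul_sub, Matrix.add_mul, Matrix.mul_add, Matrix.mul_assoc]
  abel

theorem Ricc_eq_gainRicc_KX (hR : Rᵀ = R) (hX : Xᵀ = X) (hker : KerCond A B S R X) :
    Ricc A Q B S R X = gainRicc A Q B S R (KX A B S R X) X := by
  rw [Ricc_eq_gainRicc_sub hR hX hker (KX A B S R X), sub_self, Matrix.mul_zero, sub_zero]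

theorem RX_mul_sub_KX (hR : Rᵀ = R) (hX : Xᵀ = X) (hY : Yᵀ = Y)
    (hkerX : KerCond A B S R X) (hkerY : KerCond A B S R Y) :
    RX R B Y * (KX A B S R X - KX A B S R Y) = -(Bᵀ * (Y - X) * AX A B S R X) := by
  have hRY : RX R B Y = RX R B X + Bᵀ * (Y - X) * B := by
    simp only [RX, Matrix.mul_sub, Matrix.sub_mul]
    abel
  have hSY : (SX A B S Y)ᵀ = (SX A B S X)ᵀ + Bᵀ * (Y - X) * A := by
    simp only [SX, transpose_add, transpose_mul, transpose_transpose, hX, hY,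
      Matrix.mul_sub, Matrix.sub_mul, Matrix.mul_assoc]
    abel
  rw [Matrix.mul_sub, RX_mul_KX hR hY hkerY, hSY, hRY, Matrix.add_mul, RX_mul_KX hR hX hkerX, AX]
  simp only [Matrix.mul_sub, Matrix.mul_assoc]
  abel

end Riccati

theorem stmt_15_general {n m : ℕ}
    (A Q : Matrix (Fin n) (Fin n) ℝ) (B S : Matrix (Fin n) (Fin m) ℝ)
    (R : Matrix (Fin m) (Fin m) ℝ)
    (hPi : (fromBlocks Q S Sᵀ R).PosSemidef)
    (Xo : Matrix (Fin n) (Fin n) ℝ) (hXo : IsCGDARESolution A Q B S R Xo)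
    (X1 : Matrix (Fin n) (Fin n) ℝ) (hX1 : X1ᵀ = X1) (hk1 : KerCond A B S R X1) :
    Ricc A Q B S R X1 - Xo =
      (AX A B S R Xo)ᵀ * (X1 - Xo) * AX A B S R Xo -
        (AX A B S R Xo)ᵀ * (X1 - Xo) * B * mpinv (R + Bᵀ * X1 * B) * Bᵀ *
          (X1 - Xo) * AX A B S R Xo := by
  obtain ⟨hXo, hXoRicc, hko⟩ := hXo
  rw [show R + Bᵀ * X1 * B = RX R B X1 from rfl]
  have hR : Rᵀ = R := by
    simpa only [IsHermitian, conjTranspose_eq_transpose_of_trivial] using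
      (isHermitian_fromBlocks_iff.mp hPi.isHermitian).2.2.2
  have hMP := isMoorePenroseInverse_mpinv_of_transpose_eq (transpose_RX (B := B) hR hX1)
  set W := KX A B S R Xo - KX A B S R X1
  calc Ricc A Q B S R X1 - Xo
      = gainRicc A Q B S R (KX A B S R Xo) X1 - Wᵀ * RX R B X1 * W
          - gainRicc A Q B S R (KX A B S R Xo) Xo := by
        rw [← Ricc_eq_gainRicc_sub hR hX1 hk1, ← Ricc_eq_gainRicc_KX hR hXo hko, ← hXoRicc]
    _ = (AX A B S R Xo)ᵀ * (X1 - Xo) * AX A B S R Xo -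
          (RX R B X1 * W)ᵀ * mpinv (RX R B X1) * (RX R B X1 * W) := by
        rw [sub_right_comm, gainRicc_sub_gainRicc, hMP.transpose_mul_mul (transpose_RX hR hX1)]
        rfl
    _ = _ := by
        rw [RX_mul_sub_KX hR hXo hX1 hko hk1]
        simp only [transpose_neg, transpose_mul, transpose_sub, transpose_transpose, hX1, hXo,
          Matrix.neg_mul, Matrix.mul_neg, neg_neg, Matrix.mul_assoc]

/-- one-step difference identity for the generalised Riccati difference
equation: `Δ_t = A_{X∘}ᵀ Δ_{t+1} A_{X∘} - A_{X∘}ᵀ Δ_{t+1} B (R + BᵀX_{t+1}B)† Bᵀ Δ_{t+1} A_{X∘}`. -/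
theorem stmt_15 {n m : ℕ} (hn : 0 < n) (hm : 0 < m)
    (A Q : Matrix (Fin n) (Fin n) ℝ) (B S : Matrix (Fin n) (Fin m) ℝ)
    (R : Matrix (Fin m) (Fin m) ℝ)
    (hPi : (fromBlocks Q S Sᵀ R).PosSemidef)
    (Xo : Matrix (Fin n) (Fin n) ℝ) (hXo : IsCGDARESolution A Q B S R Xo)
    (X1 : Matrix (Fin n) (Fin n) ℝ) (hX1 : X1ᵀ = X1) (hk1 : KerCond A B S R X1) :
    Ricc A Q B S R X1 - Xo =
      (AX A B S R Xo)ᵀ * (X1 - Xo) * AX A B S R Xo -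
        (AX A B S R Xo)ᵀ * (X1 - Xo) * B * mpinv (R + Bᵀ * X1 * B) * Bᵀ *
          (X1 - Xo) * AX A B S R Xo :=
  stmt_15_general A Q B S R hPi Xo hXo X1 hX1 hk1
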